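/- For all x > 0, Θ''(x+1) − Θ''(x) = p(x)/q(x) where Θ(x) = log Γ(x+1) − x·log x + x − (1/2)·log(2π) − (1/4)·log(x² + x/3 + 1/18), p(x) = 625 + 9816x + 42516x² + 63936x³ + 38556x⁴ + 7776x⁵, and q(x) = x(1+x)²(1+6x+18x²)²(25+42x+18x²)². -/

import Mathlib

noncomputable def Θ (x : ℝ) : ℝ :=
  Real.log (Real.Gamma (x + 1)) - x * Real.log x + x
    - (1/2) * Real.log (2 * Real.pi) - (1/4) * Real.log (x^2 + x/3 + 1/18)

/-!
Write `Θ = L - S` with `L x = log Γ(x + 1)` and `S = stirlingApprox` elementary.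
From `Γ(x + 2) = (x + 1) Γ(x + 1)` we get `L (x + 1) = L x + log (x + 1)`, and differentiating
twice gives `L''(x + 1) - L''(x) = -1/(x + 1)²` (that is, `ψ'(x + 2) - ψ'(x + 1) = -1/(x + 1)²`)
without knowing `L''` itself. `S''` is an explicit rational function, so what remains is an
identity of rational functions.
-/

open Real Filter Topology

section SecondDerivative

variable {𝕜 : Type*} [NontriviallyNormedField 𝕜] {F : Type*} [NormedAddCommGroup F]
  [NormedSpace 𝕜 F] {f g : 𝕜 → F} {x : 𝕜}

theorem deriv_deriv_eq_of_hasDerivAt {f' : 𝕜 → F} {f'' : F}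
    (hf : ∀ᶠ y in 𝓝 x, HasDerivAt f (f' y) y) (hf' : HasDerivAt f' f'' x) :
    deriv (deriv f) x = f'' := by
  have hderiv : deriv f =ᶠ[𝓝 x] f' := hf.mono fun y hy => hy.deriv
  rw [hderiv.deriv_eq, hf'.deriv]

theorem deriv_deriv_comp_add_const (a : 𝕜) :
    deriv (deriv fun y => f (y + a)) x = deriv (deriv f) (x + a) := by
  have hderiv : deriv (fun y => f (y + a)) = fun y => deriv f (y + a) :=
    funext fun y => deriv_comp_add_const f a y
  rw [hderiv, deriv_comp_add_const]

theorem deriv_deriv_add (hf : ContDiffAt 𝕜 2 f x) (hg : ContDiffAt 𝕜 2 g x) :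
    deriv (deriv (f + g)) x = deriv (deriv f) x + deriv (deriv g) x := by
  have hderiv : deriv (f + g) =ᶠ[𝓝 x] deriv f + deriv g := by
    filter_upwards [hf.eventually (by simp), hg.eventually (by simp)] with y hfy hgy
    exact deriv_add (hfy.differentiableAt (by simp)) (hgy.differentiableAt (by simp))
  rw [hderiv.deriv_eq]
  exact deriv_add ((hf.derivWithin (m := 1) le_rfl).differentiableAt one_ne_zero)
    ((hg.derivWithin (m := 1) le_rfl).differentiableAt one_ne_zero)

theorem deriv_deriv_sub (hf : ContDiffAt 𝕜 2 f x) (hg : ContDiffAt 𝕜 2 g x) :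
    deriv (deriv (f - g)) x = deriv (deriv f) x - deriv (deriv g) x := by
  rw [sub_eq_add_neg f g, deriv_deriv_add (g := -g) hf hg.neg, deriv.neg', deriv.fun_neg,
    sub_eq_add_neg]

theorem deriv_deriv_add_const_sub {a : 𝕜} (hfg : ∀ᶠ y in 𝓝 x, f (y + a) = f y + g y)
    (hf : ContDiffAt 𝕜 2 f x) (hg : ContDiffAt 𝕜 2 g x) :
    deriv (deriv f) (x + a) - deriv (deriv f) x = deriv (deriv g) x := by
  have hshift : (fun y => f (y + a)) =ᶠ[𝓝 x] f + g := hfg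
  rw [← deriv_deriv_comp_add_const, hshift.deriv.deriv_eq, deriv_deriv_add hf hg,
    add_sub_cancel_left]

end SecondDerivative

theorem Real.contDiffAt_Gamma {n : WithTop ℕ∞} {y : ℝ} (hy : 0 < y) :
    ContDiffAt ℝ n Gamma y := by
  have hanalytic : AnalyticAt ℂ Complex.Gamma y := by
    rw [Complex.analyticAt_iff_eventually_differentiableAt]
    have hre : ∀ᶠ s : ℂ in 𝓝 y, 0 < s.re :=
      Complex.continuous_re.continuousAt.eventually (lt_mem_nhds (by simpa using hy))
    filter_upwards [hre] with s hs
    refine Complex.differentiableAt_Gamma s fun m hm => ?_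
    rw [hm] at hs
    simp only [Complex.neg_re, Complex.natCast_re, Left.neg_pos_iff] at hs
    exact hs.not_ge m.cast_nonneg
  have hGamma : Gamma = fun t : ℝ => (Complex.Gamma t).re := by
    funext t; rw [Complex.Gamma_ofReal, Complex.ofReal_re]
  rw [hGamma]
  exact hanalytic.contDiffAt.real_of_complex

theorem contDiffAt_log_Gamma_add_one {n : WithTop ℕ∞} {y : ℝ} (hy : -1 < y) :
    ContDiffAt ℝ n (fun y => log (Gamma (y + 1))) y := by
  have hy1 : 0 < y + 1 := by linarith
  exact (contDiffAt_log.mpr (Gamma_pos_of_pos hy1).ne').comp y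
    ((contDiffAt_Gamma hy1).comp y (contDiffAt_id.add contDiffAt_const))

theorem deriv_deriv_log_Gamma_add_one_sub {x : ℝ} (hx : -1 < x) :
    deriv (deriv fun y => log (Gamma (y + 1))) (x + 1)
      - deriv (deriv fun y => log (Gamma (y + 1))) x = -1 / (x + 1) ^ 2 := by
  have hshift :
      ∀ᶠ y in 𝓝 x, log (Gamma (y + 1 + 1)) = log (Gamma (y + 1)) + log (y + 1) := by
    filter_upwards [lt_mem_nhds hx] with y hy
    have hy1 : 0 < y + 1 := by linarith
    rw [Gamma_add_one hy1.ne', log_mul hy1.ne' (Gamma_pos_of_pos hy1).ne', add_comm]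
  have hlog : ContDiffAt ℝ 2 (fun y => log (y + 1)) x :=
    (contDiffAt_log.mpr (by linarith)).comp x (contDiffAt_id.add contDiffAt_const)
  rw [deriv_deriv_add_const_sub hshift (contDiffAt_log_Gamma_add_one hx) hlog]
  refine deriv_deriv_eq_of_hasDerivAt (f' := fun y => (y + 1)⁻¹) ?_ ?_
  · filter_upwards [lt_mem_nhds hx] with y hy
    simpa using ((hasDerivAt_id' y).add_const 1).log (by linarith)
  · exact ((hasDerivAt_id' x).add_const 1).fun_inv (by linarith)

noncomputable def stirlingApprox (y : ℝ) : ℝ :=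
  y * log y - y + (1/2) * log (2 * π) + (1/4) * log (y^2 + y/3 + 1/18)

theorem one_add_six_mul_add_eighteen_mul_sq_pos (y : ℝ) : 0 < 1 + 6 * y + 18 * y ^ 2 := by
  nlinarith [sq_nonneg (6 * y + 1)]

theorem hasDerivAt_stirlingApprox {y : ℝ} (hy : 0 < y) :
    HasDerivAt stirlingApprox (log y + 3 * (6 * y + 1) / (2 * (1 + 6 * y + 18 * y ^ 2))) y := by
  have hq := one_add_six_mul_add_eighteen_mul_sq_pos y
  have hq' : 0 < y ^ 2 + y / 3 + 1 / 18 := by nlinarith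
  have h : HasDerivAt stirlingApprox _ y :=
    ((((hasDerivAt_id' y).mul (hasDerivAt_log hy.ne')).sub (hasDerivAt_id' y)).add_const
      ((1/2) * log (2 * π))).add
      ((((hasDerivAt_pow 2 y).add ((hasDerivAt_id' y).div_const 3)).add_const (1/18 : ℝ)).log
        hq'.ne' |>.const_mul (1/4 : ℝ))
  refine h.congr_deriv ?_
  simp only [Pi.add_apply]
  field_simp
  ring

theorem hasDerivAt_deriv_stirlingApprox {y : ℝ} (hy : 0 < y) :
    HasDerivAt (fun y => log y + 3 * (6 * y + 1) / (2 * (1 + 6 * y + 18 * y ^ 2)))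
      (1 / y - 54 * y * (3 * y + 1) / (1 + 6 * y + 18 * y ^ 2) ^ 2) y := by
  have hq := one_add_six_mul_add_eighteen_mul_sq_pos y
  have h : HasDerivAt (fun y => log y + 3 * (6 * y + 1) / (2 * (1 + 6 * y + 18 * y ^ 2))) _ y :=
    (hasDerivAt_log hy.ne').add ((((hasDerivAt_id' y).const_mul 6).add_const 1).const_mul 3
      |>.div (((hasDerivAt_const y 1).add ((hasDerivAt_id' y).const_mul 6)).add
        ((hasDerivAt_pow 2 y).const_mul 18) |>.const_mul 2) (by positivity))
  refine h.congr_deriv ?_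
  field_simp
  ring

theorem contDiffAt_stirlingApprox {n : WithTop ℕ∞} {y : ℝ} (hy : 0 < y) :
    ContDiffAt ℝ n stirlingApprox y := by
  have hq : y ^ 2 + y / 3 + 1 / 18 ≠ 0 := by
    nlinarith [one_add_six_mul_add_eighteen_mul_sq_pos y]
  unfold stirlingApprox
  fun_prop (disch := first | exact hy.ne' | exact hq)

theorem deriv_deriv_Θ {y : ℝ} (hy : 0 < y) :
    deriv (deriv Θ) y = deriv (deriv fun y => log (Gamma (y + 1))) y
      - (1 / y - 54 * y * (3 * y + 1) / (1 + 6 * y + 18 * y ^ 2) ^ 2) := by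
  have hΘ : Θ = (fun y => log (Gamma (y + 1))) - stirlingApprox := by
    funext z
    simp only [Θ, stirlingApprox, Pi.sub_apply]
    ring
  have hS : ∀ᶠ z in 𝓝 y, HasDerivAt stirlingApprox
      (log z + 3 * (6 * z + 1) / (2 * (1 + 6 * z + 18 * z ^ 2))) z := by
    filter_upwards [lt_mem_nhds hy] with z hz using hasDerivAt_stirlingApprox hz
  rw [hΘ, deriv_deriv_sub (contDiffAt_log_Gamma_add_one (by linarith))
    (contDiffAt_stirlingApprox hy),
    deriv_deriv_eq_of_hasDerivAt hS (hasDerivAt_deriv_stirlingApprox hy)]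

theorem stmt_16 (x : ℝ) (hx : 0 < x) :
    deriv (deriv Θ) (x + 1) - deriv (deriv Θ) x =
      (625 + 9816*x + 42516*x^2 + 63936*x^3 + 38556*x^4 + 7776*x^5) /
      (x * (1 + x)^2 * (1 + 6*x + 18*x^2)^2 * (25 + 42*x + 18*x^2)^2) := by
  have htrigamma := deriv_deriv_log_Gamma_add_one_sub (show -1 < x by linarith)
  have hdiff : deriv (deriv Θ) (x + 1) - deriv (deriv Θ) x = -1 / (x + 1) ^ 2
      - (1 / (x + 1) - 54 * (x + 1) * (3 * x + 4) / (25 + 42 * x + 18 * x ^ 2) ^ 2)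
      + (1 / x - 54 * x * (3 * x + 1) / (1 + 6 * x + 18 * x ^ 2) ^ 2) := by
    rw [deriv_deriv_Θ (by linarith), deriv_deriv_Θ hx, ← htrigamma]
    ring
  have hq := one_add_six_mul_add_eighteen_mul_sq_pos x
  have hq₁ : 0 < 25 + 42 * x + 18 * x ^ 2 := by
    nlinarith [one_add_six_mul_add_eighteen_mul_sq_pos (x + 1)]
  rw [hdiff]
  field_simp
  ring
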